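/- Let U ⊆ ℂ be a nonempty connected open set and let f : ℂ → ℂ be analytic on U with f'(x) ≠ 0 for all x ∈ U. Then S(f) := ((f')⁻¹f'')' − (1/2)((f')⁻¹f'')² vanishes identically on U if and only if there exist a, b, c, d ∈ ℂ with a·d − b·c ≠ 0 such that c·x+d ≠ 0 and f(x) = (a·x+b)/(c·x+d) for all x ∈ U. -/

import Mathlib

/-!
With `p = 1 / f'` the Schwarzian is `(p'² / 2 - p p'') / p²`, so `S(f) = 0` says `p'² = 2 p p''`.
Differentiating this gives `p p''' = 0`, so `p` is a quadratic polynomial on the connected set `U`,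
and the equation at a single point says that its discriminant vanishes: `p = (c x + d)² / D`.
The primitives of `f' = D / (c x + d)²` are exactly Möbius maps, and conversely the derivative of a
Möbius map has this form.
-/

open Set

variable {𝕜 : Type*}

section NontriviallyNormedField

variable [NontriviallyNormedField 𝕜] {U : Set 𝕜} {f p : 𝕜 → 𝕜}

noncomputable def schwarzian (f : 𝕜 → 𝕜) (x : 𝕜) : 𝕜 :=
  deriv (fun t => (deriv f t)⁻¹ * deriv (deriv f) t) x
    - (1 / 2 : 𝕜) * ((deriv f x)⁻¹ * deriv (deriv f) x) ^ 2

def IsMoebiusOn (f : 𝕜 → 𝕜) (U : Set 𝕜) : Prop :=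
  ∃ a b c d : 𝕜, a * d - b * c ≠ 0 ∧ ∀ x ∈ U, c * x + d ≠ 0 ∧ f x = (a * x + b) / (c * x + d)

theorem deriv_moebius {a b c d x : 𝕜} (hx : c * x + d ≠ 0) :
    deriv (fun x => (a * x + b) / (c * x + d)) x = (a * d - b * c) / (c * x + d) ^ 2 :=
  ((((hasDerivAt_id x).const_mul a).add_const b).div
    (((hasDerivAt_id x).const_mul c).add_const d) hx).deriv.trans (by simp; ring)

theorem IsMoebiusOn.exists_deriv_eq (hU : IsOpen U) (hf : IsMoebiusOn f U) :
    ∃ c d D : 𝕜, D ≠ 0 ∧ ∀ x ∈ U, c * x + d ≠ 0 ∧ deriv f x = D / (c * x + d) ^ 2 := by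
  obtain ⟨a, b, c, d, hD, hf⟩ := hf
  have hfU : EqOn f (fun x => (a * x + b) / (c * x + d)) U := fun x hx => (hf x hx).2
  exact ⟨c, d, a * d - b * c, hD, fun x hx =>
    ⟨(hf x hx).1, (hfU.deriv hU hx).trans (deriv_moebius (hf x hx).1)⟩⟩

theorem schwarzian_eq_of_eqOn_deriv_inv [CharZero 𝕜] (hU : IsOpen U) (hp : ContDiffOn 𝕜 2 p U)
    (hp0 : ∀ x ∈ U, p x ≠ 0) (hfp : EqOn (deriv f) p⁻¹ U) {x : 𝕜} (hx : x ∈ U) :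
    schwarzian f x = ((1 / 2) * deriv p x ^ 2 - p x * deriv (deriv p) x) / p x ^ 2 := by
  have hp₁ : ∀ t ∈ U, DifferentiableAt 𝕜 p t := fun t ht =>
    (hp.differentiableOn two_ne_zero t ht).differentiableAt (hU.mem_nhds ht)
  have hp₂ : DifferentiableAt 𝕜 (deriv p) x :=
    ((hp.deriv_of_isOpen hU (by norm_num : (1 : WithTop ℕ∞) + 1 ≤ 2)).differentiableOn one_ne_zero
      x hx).differentiableAt (hU.mem_nhds hx)
  have hf₂ : EqOn (deriv (deriv f)) (fun t => -deriv p t / p t ^ 2) U := fun t ht => by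
    rw [hfp.deriv hU ht, deriv_inv'' (hp₁ t ht) (hp0 t ht)]
  have hg : EqOn (fun t => (deriv f t)⁻¹ * deriv (deriv f) t) (fun t => -deriv p t / p t) U :=
    fun t ht => by
      have := hp0 t ht
      simp only [hfp ht, hf₂ ht, Pi.inv_apply, inv_inv]
      field_simp
  have hg' : HasDerivAt (fun t => -deriv p t / p t)
      ((-deriv (deriv p) x * p x - -deriv p x * deriv p x) / p x ^ 2) x :=
    hp₂.hasDerivAt.neg.div (hp₁ x hx).hasDerivAt (hp0 x hx)
  have hgx : (deriv f x)⁻¹ * deriv (deriv f) x = -deriv p x / p x := hg hx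
  have := hp0 x hx
  rw [schwarzian, hg.deriv hU hx, hg'.deriv, hgx]
  field_simp
  ring

theorem ode_of_eqOn_sq_div [CharZero 𝕜] (hU : IsOpen U) {c d D : 𝕜}
    (hp : EqOn p (fun x => (c * x + d) ^ 2 / D) U) :
    ∀ x ∈ U, (1 / 2) * deriv p x ^ 2 = p x * deriv (deriv p) x := by
  have hp₁ : EqOn (deriv p) (fun x => 2 * c * (c * x + d) / D) U := fun x hx =>
    (hp.deriv hU hx).trans <| (((((hasDerivAt_id x).const_mul c).add_const d).pow 2).div_const
      D).deriv.trans (by simp; ring)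
  have hp₂ : EqOn (deriv (deriv p)) (fun _ => 2 * c ^ 2 / D) U := fun x hx =>
    (hp₁.deriv hU hx).trans <| (((((hasDerivAt_id x).const_mul c).add_const d).const_mul
      (2 * c)).div_const D).deriv.trans (by simp; ring)
  intro x hx
  rw [hp hx, hp₁ hx, hp₂ hx]
  ring

end NontriviallyNormedField

section RCLike

variable [RCLike 𝕜] {U : Set 𝕜} {f p : 𝕜 → 𝕜}

theorem deriv_deriv_deriv_eqOn_zero_of_ode (hU : IsOpen U) (hp : ContDiffOn 𝕜 3 p U)
    (hp0 : ∀ x ∈ U, p x ≠ 0)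
    (hode : ∀ x ∈ U, (1 / 2) * deriv p x ^ 2 = p x * deriv (deriv p) x) :
    EqOn (deriv (deriv (deriv p))) 0 U := by
  intro x hx
  have hp₂ := hp.deriv_of_isOpen hU (by norm_num : (2 : WithTop ℕ∞) + 1 ≤ 3)
  have hd : ∀ {g : 𝕜 → 𝕜}, DifferentiableOn 𝕜 g U → HasDerivAt g (deriv g x) x := fun hg =>
    ((hg x hx).differentiableAt (hU.mem_nhds hx)).hasDerivAt
  have hzero : EqOn (fun t => (1 / 2) * deriv p t ^ 2 - p t * deriv (deriv p) t) (fun _ => 0) U :=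
    fun t ht => sub_eq_zero.mpr (hode t ht)
  -- differentiating the equation cancels the `p' p''` terms
  have H := (((hd (hp₂.differentiableOn two_ne_zero)).pow 2).const_mul (1 / 2 : 𝕜)).sub
    ((hd (hp.differentiableOn three_ne_zero)).mul
      (hd ((hp₂.deriv_of_isOpen hU le_rfl).differentiableOn one_ne_zero)))
  have h := (hzero.deriv hU hx).symm.trans H.deriv
  rw [deriv_const] at h
  norm_num at h
  have h' : p x * deriv (deriv (deriv p)) x = 0 := by linear_combination h
  exact (mul_eq_zero.mp h').resolve_left (hp0 x hx)

theorem eqOn_taylor_of_deriv_deriv_deriv_eqOn_zero (hU : IsOpen U) (hconn : IsPreconnected U)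
    (hp : ContDiffOn 𝕜 3 p U) (h3 : EqOn (deriv (deriv (deriv p))) 0 U) {x₀ : 𝕜} (hx₀ : x₀ ∈ U) :
    EqOn p (fun x => p x₀ + deriv p x₀ * (x - x₀) + deriv (deriv p) x₀ / 2 * (x - x₀) ^ 2) U := by
  have hp₂ := hp.deriv_of_isOpen hU (by norm_num : (2 : WithTop ℕ∞) + 1 ≤ 3)
  have h2 : EqOn (deriv (deriv p)) (fun _ => deriv (deriv p) x₀) U :=
    hU.eqOn_of_deriv_eq hconn ((hp₂.deriv_of_isOpen hU le_rfl).differentiableOn one_ne_zero)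
      (differentiableOn_const _) (fun x hx => by simp [h3 hx]) hx₀ rfl
  have h1 : EqOn (deriv p) (fun x => deriv p x₀ + deriv (deriv p) x₀ * (x - x₀)) U :=
    hU.eqOn_of_deriv_eq hconn (hp₂.differentiableOn two_ne_zero) (by fun_prop) (fun x hx =>
      (h2 hx).trans <| Eq.symm <|
        ((((hasDerivAt_id x).sub_const x₀).const_mul _).const_add _).deriv.trans (by simp))
      hx₀ (by simp)
  exact hU.eqOn_of_deriv_eq hconn (hp.differentiableOn three_ne_zero) (by fun_prop) (fun x hx =>
    (h1 hx).trans <| Eq.symm <|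
      ((((hasDerivAt_id x).sub_const x₀).const_mul _).const_add _ |>.add
        ((((hasDerivAt_id x).sub_const x₀).pow 2).const_mul _)).deriv.trans (by simp; ring))
    hx₀ (by simp)

theorem exists_eqOn_sq_div_of_ode (hU : IsOpen U) (hconn : IsPreconnected U) (hne : U.Nonempty)
    (hp : ContDiffOn 𝕜 3 p U) (hp0 : ∀ x ∈ U, p x ≠ 0)
    (hode : ∀ x ∈ U, (1 / 2) * deriv p x ^ 2 = p x * deriv (deriv p) x) :
    ∃ c d D : 𝕜, D ≠ 0 ∧ EqOn p (fun x => (c * x + d) ^ 2 / D) U := by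
  obtain ⟨x₀, hx₀⟩ := hne
  have hp₀ := hp0 x₀ hx₀
  have hode₀ := hode x₀ hx₀
  have htaylor := eqOn_taylor_of_deriv_deriv_deriv_eqOn_zero hU hconn hp
    (deriv_deriv_deriv_eqOn_zero_of_ode hU hp hp0 hode) hx₀
  refine ⟨deriv p x₀ / 2, p x₀ - deriv p x₀ / 2 * x₀, p x₀, hp₀, fun x hx => ?_⟩
  rw [htaylor hx]
  field_simp
  linear_combination -2 * (x - x₀) ^ 2 * hode₀

theorem isMoebiusOn_of_deriv_eq (hU : IsOpen U) (hconn : IsPreconnected U) (hne : U.Nonempty)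
    (hf : DifferentiableOn 𝕜 f U) {c d D : 𝕜} (hD : D ≠ 0) (hcd : ∀ x ∈ U, c * x + d ≠ 0)
    (hf' : ∀ x ∈ U, deriv f x = D / (c * x + d) ^ 2) : IsMoebiusOn f U := by
  obtain ⟨x₀, hx₀⟩ := hne
  set e := c * x₀ + d
  have he : e ≠ 0 := hcd x₀ hx₀
  have hecd : ∀ x ∈ U, e * c * x + e * d ≠ 0 := fun x hx => by
    rw [show e * c * x + e * d = e * (c * x + d) by ring]
    exact mul_ne_zero he (hcd x hx)
  -- a primitive of `D / (c x + d)²` vanishing at `x₀`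
  obtain ⟨E, hE⟩ := hU.exists_eq_add_of_deriv_eq hconn hf
    (g := fun x => (D * x + -(D * x₀)) / (e * c * x + e * d))
    (DifferentiableOn.div (by fun_prop) (by fun_prop) hecd)
    (fun x hx => by
      rw [hf' x hx, deriv_moebius (hecd x hx)]
      have := hcd x hx
      field_simp
      ring)
  refine ⟨D + E * e * c, -(D * x₀) + E * e * d, e * c, e * d, ?_, fun x hx => ⟨hecd x hx, ?_⟩⟩
  · rw [show (D + E * e * c) * (e * d) - (-(D * x₀) + E * e * d) * (e * c) = D * e ^ 2 by ring]
    exact mul_ne_zero hD (pow_ne_zero 2 he)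
  · rw [hE hx]
    exact (div_add' _ _ _ (hecd x hx)).trans (by ring)

end RCLike

/-- For a scalar analytic function with nonvanishing derivative on a nonempty
connected open set, the Schwartz derivative `((f')⁻¹f'')' - (1/2)((f')⁻¹f'')²`
vanishes identically iff `f` is a Möbius map. -/
theorem schwarzian_zero_iff_moebius (U : Set ℂ) (hU : IsOpen U)
    (hne : U.Nonempty) (hconn : IsPreconnected U)
    (f : ℂ → ℂ) (hf : AnalyticOnNhd ℂ f U)
    (hf' : ∀ x ∈ U, deriv f x ≠ 0) :
    (∀ x ∈ U,
        deriv (fun t => (deriv f t)⁻¹ * deriv (deriv f) t) x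
          - (1 / 2 : ℂ) * ((deriv f x)⁻¹ * deriv (deriv f) x) ^ 2 = 0) ↔
      ∃ a b c d : ℂ, a * d - b * c ≠ 0 ∧
        ∀ x ∈ U, c * x + d ≠ 0 ∧ f x = (a * x + b) / (c * x + d) := by
  change (∀ x ∈ U, schwarzian f x = 0) ↔ IsMoebiusOn f U
  set p : ℂ → ℂ := fun x => (deriv f x)⁻¹
  have hp : ContDiffOn ℂ 3 p U := (hf.deriv.inv hf').contDiffOn_of_completeSpace
  have hp0 : ∀ x ∈ U, p x ≠ 0 := fun x hx => inv_ne_zero (hf' x hx)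
  have hS : ∀ x ∈ U, schwarzian f x = 0 ↔ (1 / 2) * deriv p x ^ 2 = p x * deriv (deriv p) x :=
    fun x hx => by
      rw [schwarzian_eq_of_eqOn_deriv_inv hU (hp.of_le (by norm_num)) hp0
        (fun t _ => (inv_inv _).symm) hx, div_eq_zero_iff, sub_eq_zero]
      simp [hp0 x hx]
  constructor
  · intro hzero
    obtain ⟨c, d, D, hD, hpcd⟩ := exists_eqOn_sq_div_of_ode hU hconn hne hp hp0
      fun x hx => (hS x hx).1 (hzero x hx)
    have hcd : ∀ x ∈ U, c * x + d ≠ 0 := fun x hx hx0 => hp0 x hx (by simp [hpcd hx, hx0])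
    refine isMoebiusOn_of_deriv_eq hU hconn hne hf.differentiableOn hD hcd fun x hx => ?_
    rw [← inv_inv (deriv f x)]
    exact (congrArg _ (hpcd hx)).trans (inv_div _ _)
  · intro hmoeb
    obtain ⟨c, d, D, -, hfcd⟩ := hmoeb.exists_deriv_eq hU
    have hpcd : EqOn p (fun x => (c * x + d) ^ 2 / D) U := fun x hx => by simp [p, (hfcd x hx).2]
    exact fun x hx => (hS x hx).2 (ode_of_eqOn_sq_div hU hpcd x hx)
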